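/- Let L be a first-order language with at most κ symbols, where κ is an infinite cardinal, let δ be a limit ordinal, and let M be an L-structure of cardinality h_δ(κ). Then there exists an increasing chain ⟨M_i : i < δ⟩ of elementary substructures of M such that M_i has cardinality h_i(κ) for each i < δ, M_i ⊆ M_j whenever i ≤ j < δ, and M is the union of the M_i. -/

import Mathlib

/-!
Well-order `M` in order type `ord #M`. Since `#M = h_δ(κ) = sup_{i<δ} h_i(κ)`, the initial
segments `S_i` of order type `ord (h_i(κ))` cover `M` and have size at most `h_i(κ)`. By
recursion, let `M_i` be a downward Löwenheim–Skolem hull of size `h_i(κ)` of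
`S_i ∪ ⋃_{j<i} M_j`: this seed is small enough because `h` is increasing and `|i| ≤ h_i(κ)`.
-/

/-- The Hanf number function `h_α(κ)`, defined by transfinite recursion:
`h_0(κ) = κ`, `h_{α+1}(κ) = ℶ_{(2^{h_α(κ)})⁺}`, and `h_δ(κ) = sup_{α<δ} h_α(κ)`
for `δ` a limit ordinal. -/
noncomputable def hanf (κ : Cardinal) (α : Ordinal) : Cardinal :=
  Ordinal.limitRecOn α κ
    (fun _ ih => Cardinal.beth (Order.succ ((2 : Cardinal) ^ ih)).ord)
    (fun δ _ ih => ⨆ i : Set.Iio δ, ih i i.2)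

open FirstOrder Cardinal

universe u v w

open Set

theorem hanf_zero (κ : Cardinal.{u}) : hanf κ 0 = κ :=
  Ordinal.limitRecOn_zero _ _ _

theorem hanf_succ (κ : Cardinal.{u}) (α : Ordinal.{u}) :
    hanf κ (Order.succ α) = beth (Order.succ ((2 : Cardinal) ^ hanf κ α)).ord :=
  Ordinal.limitRecOn_add_one _ _ _ _

theorem hanf_of_isSuccLimit (κ : Cardinal.{u}) {δ : Ordinal.{u}} (hδ : Order.IsSuccLimit δ) :
    hanf κ δ = ⨆ i : Iio δ, hanf κ i :=
  Ordinal.limitRecOn_limit _ _ _ _ hδ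

theorem hanf_lt_hanf_succ (κ : Cardinal.{u}) (α : Ordinal.{u}) :
    hanf κ α < hanf κ (Order.succ α) := by
  rw [hanf_succ]
  calc hanf κ α < 2 ^ hanf κ α := cantor _
    _ < Order.succ ((2 : Cardinal) ^ hanf κ α) := Order.lt_succ _
    _ ≤ beth (Order.succ ((2 : Cardinal) ^ hanf κ α)).ord := le_beth_ord _

theorem isNormal_hanf (κ : Cardinal.{u}) :
    Order.IsNormal (hanf κ : Ordinal.{u} → Cardinal.{u}) := by
  refine .of_succ_lt (hanf_lt_hanf_succ κ) fun hδ ↦ ?_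
  rw [hanf_of_isSuccLimit κ hδ]
  exact isLUB_ciSup_set bddAbove_of_small ⟨0, hδ.bot_lt⟩

theorem self_le_hanf (κ : Cardinal.{u}) (i : Ordinal.{u}) : κ ≤ hanf κ i :=
  (hanf_zero κ).ge.trans ((isNormal_hanf κ).monotone (zero_le : 0 ≤ i))

theorem card_le_hanf (κ : Cardinal.{u}) (i : Ordinal.{u}) : i.card ≤ hanf κ i := by
  have hmono : StrictMono fun i ↦ (hanf κ i).ord :=
    ord_strictMono.comp (isNormal_hanf κ).strictMono
  simpa using Ordinal.card_le_card (hmono.le_apply (x := i))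

theorem exists_cover_of_mk_le_iSup {M : Type u} {ι : Type*} (s : Set ι) (f : ι → Cardinal.{u})
    (hM : #M ≤ ⨆ i : s, f i) :
    ∃ S : ι → Set M, (∀ i, #(S i) ≤ f i) ∧ ∀ x, ∃ i ∈ s, x ∈ S i := by
  obtain ⟨_, _, hord⟩ := exists_ord_eq_type_lt M
  let rank : M → Ordinal.{u} := Ordinal.typein (· < ·)
  refine ⟨fun i ↦ {x | rank x < (f i).ord}, fun i ↦ ?_, fun x ↦ ?_⟩
  · have hinj : Function.Injective fun x : {x | rank x < (f i).ord} ↦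
        (⟨rank x, x.2⟩ : Iio (f i).ord) :=
      fun x y h ↦ Subtype.ext (Ordinal.typein_injective _ (congrArg Subtype.val h))
    have := lift_mk_le_lift_mk_of_injective hinj
    rw [mk_Iio_ordinal, card_ord] at this
    simpa using this
  · have hx : (rank x).card < ⨆ i : s, f i :=
      (lt_ord.1 (hord ▸ Ordinal.typein_lt_type _ x)).trans_le hM
    obtain ⟨⟨i, hi⟩, hlt⟩ := exists_lt_of_lt_ciSup' hx
    exact ⟨i, hi, lt_ord.2 hlt⟩

namespace FirstOrder.Language

variable {L : Language.{u, v}} {M : Type w} [L.Structure M]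

open Classical in
noncomputable def elementarySubstructureOfCard (s : Set M) (c : Cardinal.{w}) :
    L.ElementarySubstructure M :=
  if h : ∃ N : L.ElementarySubstructure M, s ⊆ N ∧ #N = c then h.choose else ⊤

theorem elementarySubstructureOfCard_spec {s : Set M} {c : Cardinal.{w}} (haleph0 : ℵ₀ ≤ c)
    (hs : #s ≤ c) (hL : lift.{w} L.card ≤ lift.{max u v} c) (hM : c ≤ #M) :
    s ⊆ (elementarySubstructureOfCard s c : L.ElementarySubstructure M) ∧
      #(elementarySubstructureOfCard s c : L.ElementarySubstructure M) = c := by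
  have h : ∃ N : L.ElementarySubstructure M, s ⊆ N ∧ #N = c := by
    simpa using exists_elementarySubstructure_card_eq L s c haleph0 (by simpa using hs) hL
      (by simpa using hM)
  rw [elementarySubstructureOfCard, dif_pos h]
  exact h.choose_spec

noncomputable def elementaryChain (f : Ordinal.{w} → Cardinal.{w}) (S : Ordinal.{w} → Set M)
    (i : Ordinal.{w}) : L.ElementarySubstructure M :=
  elementarySubstructureOfCard ((⋃ j < i, (elementaryChain f S j : Set M)) ∪ S i) (f i)
termination_by i

theorem elementaryChain_spec {δ : Ordinal.{w}} {f : Ordinal.{w} → Cardinal.{w}}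
    {S : Ordinal.{w} → Set M} (hf : Monotone f) (haleph0 : ∀ i < δ, ℵ₀ ≤ f i)
    (hL : ∀ i < δ, lift.{w} L.card ≤ lift.{max u v} (f i)) (hcard : ∀ i < δ, i.card ≤ f i)
    (hM : ∀ i < δ, f i ≤ #M) (hS : ∀ i < δ, #(S i) ≤ f i) {i : Ordinal.{w}} (hi : i < δ) :
    (⋃ j < i, (elementaryChain (L := L) f S j : Set M)) ∪ S i ⊆
        (elementaryChain (L := L) f S i : Set M) ∧
      #(elementaryChain (L := L) f S i) = f i := by
  induction i using WellFoundedLT.induction with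
  | _ i IH =>
    have hunion : #(⋃ j < i, (elementaryChain (L := L) f S j : Set M)) ≤ f i :=
      mk_biUnion_le_of_le (hcard i hi) (haleph0 i hi) _ fun j hj ↦
        ((IH j hj (hj.trans hi)).2).trans_le (hf hj.le)
    rw [elementaryChain]
    exact elementarySubstructureOfCard_spec (haleph0 i hi)
      ((mk_union_le _ _).trans (add_le_of_le (haleph0 i hi) hunion (hS i hi))) (hL i hi) (hM i hi)

theorem exists_elementarySubstructure_chain {δ : Ordinal.{w}} {f : Ordinal.{w} → Cardinal.{w}}
    {S : Ordinal.{w} → Set M} (hf : Monotone f) (haleph0 : ∀ i < δ, ℵ₀ ≤ f i)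
    (hL : ∀ i < δ, lift.{w} L.card ≤ lift.{max u v} (f i)) (hcard : ∀ i < δ, i.card ≤ f i)
    (hM : ∀ i < δ, f i ≤ #M) (hS : ∀ i < δ, #(S i) ≤ f i) :
    ∃ N : Ordinal.{w} → L.ElementarySubstructure M, ∀ i < δ,
      #(N i) = f i ∧ S i ⊆ N i ∧ ∀ j ≤ i, (N j : L.Substructure M) ≤ N i := by
  refine ⟨elementaryChain f S, fun i hi ↦ ?_⟩
  obtain ⟨hsub, hcard_eq⟩ := elementaryChain_spec hf haleph0 hL hcard hM hS hi
  refine ⟨hcard_eq, subset_union_right.trans hsub, fun j hj ↦ ?_⟩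
  rcases hj.lt_or_eq with hj | rfl
  · exact (subset_biUnion_of_mem (u := fun j ↦ (elementaryChain (L := L) f S j : Set M))
      hj).trans (subset_union_left.trans hsub)
  · exact le_rfl

end FirstOrder.Language

/-- Let `L` be a first-order language with at most `κ` symbols (`κ` an
infinite cardinal), `δ` a limit ordinal, and `M` an `L`-structure of cardinality
`h_δ(κ)`. Then there is an increasing chain `⟨M_i : i < δ⟩` of elementary substructures
of `M` with `#M_i = h_i(κ)`, `M_i ⊆ M_j` for `i ≤ j < δ`, and `M = ⋃_{i<δ} M_i`. -/
theorem exists_elementary_chain (κ : Cardinal.{u}) (hκ : Cardinal.aleph0 ≤ κ)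
    (L : Language.{u}) (hL : L.card ≤ κ) (δ : Ordinal.{u}) (hδ : Order.IsSuccLimit δ)
    (M : Type u) [L.Structure M] (hM : #M = hanf κ δ) :
    ∃ N : Ordinal.{u} → L.ElementarySubstructure M,
      (∀ i, i < δ → #(N i) = hanf κ i) ∧
      (∀ i j, i ≤ j → j < δ → ((N i : L.Substructure M) ≤ (N j : L.Substructure M))) ∧
      (∀ x : M, ∃ i, i < δ ∧ x ∈ N i) := by
  have hmono := (isNormal_hanf κ).monotone
  obtain ⟨S, hS, hcover⟩ :=
    exists_cover_of_mk_le_iSup (Iio δ) (hanf κ) (hM.trans (hanf_of_isSuccLimit κ hδ)).le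
  obtain ⟨N, hN⟩ := L.exists_elementarySubstructure_chain hmono
    (fun i _ ↦ hκ.trans (self_le_hanf κ i)) (fun i _ ↦ by simpa using hL.trans (self_le_hanf κ i))
    (fun i _ ↦ card_le_hanf κ i) (fun i hi ↦ hM ▸ hmono hi.le) (fun i _ ↦ hS i)
  refine ⟨N, fun i hi ↦ (hN i hi).1, fun i j hij hj ↦ (hN j hj).2.2 i hij, fun x ↦ ?_⟩
  obtain ⟨i, hi, hx⟩ := hcover x
  exact ⟨i, hi, (hN i hi).2.1 hx⟩
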